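/- For every θ ∈ [0, T₀] and every s ∈ [0, T], ⟨η(T, s, x₀(θ)) − η(0, s, x₀(θ)), N(θ)⟩ = ∫_{s−T+θ}^{s+θ} ⟨ d(τ, 0) φ(τ−θ, x₀(τ)), ⟨ẋ₀(θ), N(θ)⟩ · y(τ)^⊤ + ⟨y(θ), N(θ)⟩ · ẋ₀(τ)^⊥ ⟩ dτ. (Lemma 3) -/

import Mathlib

open scoped RealInnerProductSpace

/-- For `a = (a₁, a₂) ∈ ℝ²`, `a^⊥ = (−a₂, a₁)`. -/
noncomputable def perpVec (a : EuclideanSpace ℝ (Fin 2)) : EuclideanSpace ℝ (Fin 2) :=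
  WithLp.toLp 2 ![-(a 1), a 0]

/-- For `a = (a₁, a₂) ∈ ℝ²`, `a^⊤ = (a₂, −a₁)`. -/
noncomputable def topVec (a : EuclideanSpace ℝ (Fin 2)) : EuclideanSpace ℝ (Fin 2) :=
  WithLp.toLp 2 ![a 1, -(a 0)]

/-- The 2×2 real matrix with rows `a` and `b`. -/
noncomputable def rowsMatrix (a b : EuclideanSpace ℝ (Fin 2)) :
    Matrix (Fin 2) (Fin 2) ℝ := !![a 0, a 1; b 0, b 1]

/-- The 2×2 real matrix with columns `a` and `b`. -/
noncomputable def columnsMatrix (a b : EuclideanSpace ℝ (Fin 2)) :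
    Matrix (Fin 2) (Fin 2) ℝ := !![a 0, b 0; a 1, b 1]

/-!
Write `η(t) = η(t, s, x₀(θ))`. Along `x₀(· + θ)` it solves the planar linear system
`η' = A η + b` with `A(t) = ψ'(x₀(t + θ))` and `b(t) = φ(t, x₀(t + θ))`, both `T`-periodic,
while `U(t) = ẋ₀(t + θ)` and `Y(t) = y(t + θ)` are independent solutions of `u' = A u`.
By Liouville's formula `(U ∧ Y)' = tr A · (U ∧ Y)`, so the Cramer coordinates
`v ∧ Y / U ∧ Y` and `v ∧ U / Y ∧ U` of a solution `v` of the forced system have derivatives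
equal to the coordinates of the forcing `b` (variation of constants). The difference
`η(· + T) - η` solves the homogeneous system, so its coordinates are constant; evaluating them
at `0` and at `s - T`, where `η(s) = 0`, gives the coordinates of `η(T) - η(0)` as integrals
over `[s - T, s]`. Pairing with `N(θ)` and substituting `τ = t + θ` gives the formula, the
factor `d(τ, 0)` being `1 / (ẋ₀(τ) ∧ y(τ))`.
-/

open Set Function

local notation "ℝ²" => EuclideanSpace ℝ (Fin 2)

theorem ODE_solution_unique_of_contDiff {E : Type*} [NormedAddCommGroup E] [NormedSpace ℝ E]
    {v : E → E} (hv : ContDiff ℝ 1 v) {f g : ℝ → E}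
    (hf : ∀ t, HasDerivAt f (v (f t)) t) (hg : ∀ t, HasDerivAt g (v (g t)) t)
    {t₀ : ℝ} (heq : f t₀ = g t₀) : f = g := by
  have hf_cont : Continuous f := continuous_iff_continuousAt.2 fun t => (hf t).continuousAt
  have hg_cont : Continuous g := continuous_iff_continuousAt.2 fun t => (hg t).continuousAt
  have hopen : IsOpen {t | f t = g t} := by
    refine isOpen_iff_mem_nhds.2 fun t (ht : f t = g t) => ?_
    obtain ⟨K, u, hu, hlip⟩ := (hv.contDiffAt (x := f t)).exists_lipschitzOnWith
    exact ODE_solution_unique_of_eventually (v := fun _ => v) (s := fun _ => u)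
      (.of_forall fun _ => hlip)
      ((hf_cont.continuousAt.eventually_mem hu).mono fun t' h' => ⟨hf t', h'⟩)
      ((hg_cont.continuousAt.eventually_mem (ht ▸ hu)).mono fun t' h' => ⟨hg t', h'⟩) ht
  have huniv := IsClopen.eq_univ ⟨isClosed_eq hf_cont hg_cont, hopen⟩ ⟨t₀, heq⟩
  exact funext fun t => eq_univ_iff_forall.mp huniv t

def wedge (u v : ℝ²) : ℝ := u 0 * v 1 - u 1 * v 0

lemma wedge_swap (u v : ℝ²) : wedge v u = -wedge u v := by
  simp only [wedge]; ring

@[simp] lemma wedge_zero_left (v : ℝ²) : wedge 0 v = 0 := by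
  simp [wedge]

lemma inner_topVec (b y : ℝ²) : ⟪b, topVec y⟫ = wedge b y := by
  simp only [topVec, wedge, PiLp.inner_apply, RCLike.inner_apply, conj_trivial, Fin.sum_univ_two,
    Matrix.cons_val_zero, Matrix.cons_val_one, Matrix.cons_val_fin_one]
  ring

lemma inner_perpVec (b u : ℝ²) : ⟪b, perpVec u⟫ = wedge u b := by
  simp only [perpVec, wedge, PiLp.inner_apply, RCLike.inner_apply, conj_trivial, Fin.sum_univ_two,
    Matrix.cons_val_zero, Matrix.cons_val_one, Matrix.cons_val_fin_one]
  ring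

lemma det_rowsMatrix_topVec_perpVec (u y : ℝ²) :
    (rowsMatrix (topVec y) (perpVec u)).det = wedge u y := by
  simp only [rowsMatrix, topVec, perpVec, Matrix.det_fin_two_of, wedge, Matrix.cons_val_zero, Matrix.cons_val_one, Matrix.cons_val_fin_one]
  ring

lemma wedge_ne_zero_of_linearIndependent {u v : ℝ²} (h : LinearIndependent ℝ ![u, v]) :
    wedge u v ≠ 0 := by
  intro hw
  have hcomb : ∀ i, v i • u + (-u i) • v = 0 := by
    intro i
    ext j
    fin_cases i <;> fin_cases j <;>
      simp only [wedge, Fin.isValue, Fin.zero_eta, Fin.mk_one, PiLp.add_apply, PiLp.smul_apply,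
        smul_eq_mul, neg_smul, PiLp.neg_apply, PiLp.zero_apply] at hw ⊢ <;> linarith
  have hu : u = 0 := by
    ext i
    exact neg_eq_zero.mp (LinearIndependent.pair_iff.mp h _ _ (hcomb i)).2
  exact h.ne_zero 0 (by simpa using hu)

lemma wedge_map_add_wedge_map (A : ℝ² →L[ℝ] ℝ²) (u v : ℝ²) :
    wedge (A u) v + wedge u (A v) = LinearMap.trace ℝ ℝ² A * wedge u v := by
  have hbasis : ∀ w : ℝ², w = w 0 • EuclideanSpace.single 0 1 + w 1 • EuclideanSpace.single 1 1 :=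
    fun w => by ext i; fin_cases i <;> simp
  rw [LinearMap.trace_eq_matrix_trace ℝ (EuclideanSpace.basisFun (Fin 2) ℝ).toBasis,
    Matrix.trace_fin_two, hbasis u, hbasis v]
  simp [LinearMap.toMatrix_apply, wedge]
  ring

lemma wedge_smul_sub_wedge_smul (u y v : ℝ²) :
    wedge v y • u - wedge v u • y = wedge u y • v := by
  ext i
  fin_cases i <;>
    simp only [wedge, Fin.isValue, Fin.zero_eta, Fin.mk_one, PiLp.sub_apply, PiLp.smul_apply,
      smul_eq_mul] <;> ring

/-- The coefficient of `u` when `v` is expanded in the basis `(u, y)`. -/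
noncomputable def cramerCoord (u y v : ℝ²) : ℝ := wedge v y / wedge u y

lemma cramerCoord_smul_add_cramerCoord_smul {u y : ℝ²} (h : wedge u y ≠ 0) (v : ℝ²) :
    cramerCoord u y v • u + cramerCoord y u v • y = v := by
  rw [cramerCoord, cramerCoord, wedge_swap u y, div_neg, neg_smul, ← sub_eq_add_neg,
    div_eq_inv_mul, div_eq_inv_mul, mul_smul, mul_smul, ← smul_sub, wedge_smul_sub_wedge_smul,
    smul_smul, inv_mul_cancel₀ h, one_smul]

lemma inner_eq_cramerCoord {u y : ℝ²} (h : wedge u y ≠ 0) (v N : ℝ²) :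
    ⟪v, N⟫ = cramerCoord u y v * ⟪u, N⟫ + cramerCoord y u v * ⟪y, N⟫ := by
  conv_lhs => rw [← cramerCoord_smul_add_cramerCoord_smul h v]
  simp only [inner_add_left, real_inner_smul_left]

lemma cramerCoord_sub (u y v w : ℝ²) :
    cramerCoord u y (v - w) = cramerCoord u y v - cramerCoord u y w := by
  rw [cramerCoord, cramerCoord, cramerCoord, ← sub_div]
  congr 1
  simp only [wedge, PiLp.sub_apply]
  ring

lemma cramerCoord_zero (u y : ℝ²) : cramerCoord u y 0 = 0 := by
  simp [cramerCoord, wedge]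

lemma inner_inv_det_rowsMatrix_smul (b u y : ℝ²) (c₁ c₂ : ℝ) :
    ⟪(rowsMatrix (topVec y) (perpVec u)).det⁻¹ • b, c₁ • topVec y + c₂ • perpVec u⟫ =
      c₁ * cramerCoord u y b + c₂ * cramerCoord y u b := by
  rw [det_rowsMatrix_topVec_perpVec, real_inner_smul_left, inner_add_right, real_inner_smul_right,
    real_inner_smul_right, inner_topVec, inner_perpVec, cramerCoord, cramerCoord, wedge_swap y u,
    wedge_swap b u]
  ring

section Calculus

variable {u v : ℝ → ℝ²} {u' v' : ℝ²} {t : ℝ}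

theorem HasDerivAt.wedge (hu : HasDerivAt u u' t) (hv : HasDerivAt v v' t) :
    HasDerivAt (fun t => wedge (u t) (v t)) (wedge u' (v t) + wedge (u t) v') t := by
  have hcoord : ∀ {w : ℝ → ℝ²} {w' : ℝ²}, HasDerivAt w w' t → ∀ i,
      HasDerivAt (fun t => w t i) (w' i) t := fun hw i =>
    (EuclideanSpace.proj i : ℝ² →L[ℝ] ℝ).hasFDerivAt.comp_hasDerivAt t hw
  refine (((hcoord hu 0).mul (hcoord hv 1)).sub ((hcoord hu 1).mul (hcoord hv 0))).congr_deriv ?_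
  simp only [_root_.wedge]
  ring

/-- Liouville's formula, with a forcing term in the first factor. -/
lemma hasDerivAt_wedge_of_linear {A : ℝ² →L[ℝ] ℝ²} {b : ℝ²}
    (hu : HasDerivAt u (A (u t) + b) t) (hv : HasDerivAt v (A (v t)) t) :
    HasDerivAt (fun t => wedge (u t) (v t))
      (LinearMap.trace ℝ ℝ² A * wedge (u t) (v t) + wedge b (v t)) t := by
  refine (hu.wedge hv).congr_deriv ?_
  rw [← wedge_map_add_wedge_map]
  simp only [wedge, PiLp.add_apply]
  ring

lemma hasDerivAt_cramerCoord {A : ℝ² →L[ℝ] ℝ²} {b : ℝ²} {F U Y : ℝ → ℝ²}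
    (hF : HasDerivAt F (A (F t) + b) t) (hU : HasDerivAt U (A (U t)) t)
    (hY : HasDerivAt Y (A (Y t)) t) (hW : wedge (U t) (Y t) ≠ 0) :
    HasDerivAt (fun t => cramerCoord (U t) (Y t) (F t)) (cramerCoord (U t) (Y t) b) t := by
  have hFY := hasDerivAt_wedge_of_linear hF hY
  have hUY := hasDerivAt_wedge_of_linear (b := 0) (by simpa using hU) hY
  refine (hFY.div hUY hW).congr_deriv ?_
  simp only [cramerCoord, wedge_zero_left, add_zero]
  field_simp
  ring

end Calculus

section PeriodicLinearSystem

variable {A : ℝ → ℝ² →L[ℝ] ℝ²} {b F U Y : ℝ → ℝ²}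

lemma continuous_cramerCoord (hU : Continuous U) (hY : Continuous Y) (hb : Continuous b)
    (hW : ∀ t, wedge (U t) (Y t) ≠ 0) :
    Continuous fun t => cramerCoord (U t) (Y t) (b t) :=
  Continuous.div (by unfold wedge; fun_prop) (by unfold wedge; fun_prop) hW

lemma cramerCoord_sub_cramerCoord_eq_integral
    (hF : ∀ t, HasDerivAt F (A t (F t) + b t) t) (hU : ∀ t, HasDerivAt U (A t (U t)) t)
    (hY : ∀ t, HasDerivAt Y (A t (Y t)) t) (hW : ∀ t, wedge (U t) (Y t) ≠ 0) (hb : Continuous b)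
    (r s : ℝ) :
    cramerCoord (U s) (Y s) (F s) - cramerCoord (U r) (Y r) (F r) =
      ∫ t in r..s, cramerCoord (U t) (Y t) (b t) := by
  have hUc : Continuous U := continuous_iff_continuousAt.2 fun t => (hU t).continuousAt
  have hYc : Continuous Y := continuous_iff_continuousAt.2 fun t => (hY t).continuousAt
  refine (intervalIntegral.integral_eq_sub_of_hasDerivAt
    (fun t _ => hasDerivAt_cramerCoord (hF t) (hU t) (hY t) (hW t)) ?_).symm
  exact (continuous_cramerCoord hUc hYc hb hW).intervalIntegrable r s

/-- `F (· + T) - F` solves the homogeneous system, so its coordinates are constant. -/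
lemma cramerCoord_sub_eq_integral_of_periodic {T : ℝ} (s : ℝ) (hA : Periodic A T)
    (hbT : Periodic b T) (hF : ∀ t, HasDerivAt F (A t (F t) + b t) t)
    (hU : ∀ t, HasDerivAt U (A t (U t)) t) (hY : ∀ t, HasDerivAt Y (A t (Y t)) t)
    (hW : ∀ t, wedge (U t) (Y t) ≠ 0) (hb : Continuous b) (hFs : F s = 0) :
    cramerCoord (U 0) (Y 0) (F T - F 0) = ∫ t in (s - T)..s, cramerCoord (U t) (Y t) (b t) := by
  have hH : ∀ t, HasDerivAt (fun t => F (t + T) - F t) (A t (F (t + T) - F t) + 0) t := by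
    intro t
    have h := ((hF (t + T)).comp_add_const t T).sub (hF t)
    rw [hA t, hbT t] at h
    exact h.congr_deriv (by rw [map_sub]; abel)
  have hconst := cramerCoord_sub_cramerCoord_eq_integral hH hU hY hW continuous_const (s - T) 0
  have hforced := cramerCoord_sub_cramerCoord_eq_integral hF hU hY hW hb (s - T) s
  simp only [cramerCoord_zero, intervalIntegral.integral_zero, zero_add, sub_add_cancel,
    sub_eq_zero] at hconst
  rw [hconst, ← hforced, cramerCoord_sub, hFs, cramerCoord_zero, cramerCoord_zero, zero_sub]

lemma inner_sub_eq_integral_of_periodic {T : ℝ} (s : ℝ) (N : ℝ²) (hA : Periodic A T)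
    (hbT : Periodic b T) (hF : ∀ t, HasDerivAt F (A t (F t) + b t) t)
    (hU : ∀ t, HasDerivAt U (A t (U t)) t) (hY : ∀ t, HasDerivAt Y (A t (Y t)) t)
    (hW : ∀ t, wedge (U t) (Y t) ≠ 0) (hb : Continuous b) (hFs : F s = 0) :
    ⟪F T - F 0, N⟫ = ∫ t in (s - T)..s,
      (⟪U 0, N⟫ * cramerCoord (U t) (Y t) (b t) + ⟪Y 0, N⟫ * cramerCoord (Y t) (U t) (b t)) := by
  have hW' : ∀ t, wedge (Y t) (U t) ≠ 0 := fun t => by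
    rw [wedge_swap]
    exact neg_ne_zero.2 (hW t)
  have hUc : Continuous U := continuous_iff_continuousAt.2 fun t => (hU t).continuousAt
  have hYc : Continuous Y := continuous_iff_continuousAt.2 fun t => (hY t).continuousAt
  rw [inner_eq_cramerCoord (hW 0), intervalIntegral.integral_add,
    intervalIntegral.integral_const_mul, intervalIntegral.integral_const_mul,
    cramerCoord_sub_eq_integral_of_periodic s hA hbT hF hU hY hW hb hFs,
    cramerCoord_sub_eq_integral_of_periodic s hA hbT hF hY hU hW' hb hFs]
  · ring
  · exact ((continuous_cramerCoord hUc hYc hb hW).const_mul _).intervalIntegrable _ _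
  · exact ((continuous_cramerCoord hYc hUc hb hW').const_mul _).intervalIntegrable _ _

end PeriodicLinearSystem

theorem eta_difference_inner_N_integral_formula_general
    (ψ : EuclideanSpace ℝ (Fin 2) → EuclideanSpace ℝ (Fin 2))
    (hψ : ContDiff ℝ 2 ψ)
    (T₁ : ℝ) (hT₁ : 0 < T₁)
    (φ : ℝ → EuclideanSpace ℝ (Fin 2) → EuclideanSpace ℝ (Fin 2))
    (hφcont : Continuous fun p : ℝ × EuclideanSpace ℝ (Fin 2) => φ p.1 p.2)
    (hφper : ∀ t ξ, φ (t + T₁) ξ = φ t ξ)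
    (T₀ : ℝ)
    (x₀ : ℝ → EuclideanSpace ℝ (Fin 2))
    (hx₀sol : ∀ t : ℝ, HasDerivAt x₀ (ψ (x₀ t)) t)
    (hx₀per : Function.Periodic x₀ T₀)
    (l k : ℕ) (hk : Nat.Prime k)
    (hratio : T₀ / T₁ = (l : ℝ) / (k : ℝ))
    (T : ℝ) (hT : T = (k : ℝ) * l * T₀)
    (Ω : ℝ → ℝ → EuclideanSpace ℝ (Fin 2) → EuclideanSpace ℝ (Fin 2))
    (hΩinit : ∀ t₀ ξ, Ω t₀ t₀ ξ = ξ)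
    (hΩsol : ∀ t₀ ξ t, HasDerivAt (fun s => Ω s t₀ ξ) (ψ (Ω t t₀ ξ)) t)
    (η : ℝ → ℝ → EuclideanSpace ℝ (Fin 2) → EuclideanSpace ℝ (Fin 2))
    (hηinit : ∀ s ξ, η s s ξ = 0)
    (hηsol : ∀ s ξ t, HasDerivAt (fun u => η u s ξ)
      (fderiv ℝ ψ (Ω t 0 ξ) (η t s ξ) + φ t (Ω t 0 ξ)) t)
    (y : ℝ → EuclideanSpace ℝ (Fin 2))
    (hysol : ∀ t : ℝ, HasDerivAt y (fderiv ℝ ψ (x₀ t) (y t)) t)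
    (hyindep : ∀ t : ℝ, LinearIndependent ℝ ![ψ (x₀ t), y t])
    (N : ℝ → EuclideanSpace ℝ (Fin 2))
    (D : ℝ → Matrix (Fin 2) (Fin 2) ℝ)
    (hD : ∀ t : ℝ, D t = rowsMatrix (topVec (y t)) (perpVec (ψ (x₀ t))))
    (d : ℝ → ℝ → ℝ)
    (hd : ∀ t θ : ℝ, d t θ = ((D (t + θ)).det)⁻¹) :
    ∀ θ ∈ Set.Icc 0 T₀, ∀ s ∈ Set.Icc 0 T,
      ⟪η T s (x₀ θ) - η 0 s (x₀ θ), N θ⟫ =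
        ∫ τ in (s - T + θ)..(s + θ),
          ⟪d τ 0 • φ (τ - θ) (x₀ τ),
            ⟪ψ (x₀ θ), N θ⟫ • topVec (y τ) + ⟪y θ, N θ⟫ • perpVec (ψ (x₀ τ))⟫ := by
  intro θ _ s _
  have hψ1 : ContDiff ℝ 1 ψ := hψ.of_le one_le_two
  have hflow : ∀ t, Ω t 0 (x₀ θ) = x₀ (t + θ) := congrFun <|
    ODE_solution_unique_of_contDiff hψ1 (hΩsol 0 (x₀ θ))
      (fun t => (hx₀sol (t + θ)).comp_add_const t θ) (t₀ := 0) (by rw [hΩinit, zero_add])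
  have hx₀T : Periodic x₀ T := by
    rw [hT]; exact_mod_cast hx₀per.nat_mul (k * l)
  have hφT : ∀ ξ, Periodic (φ · ξ) T := by
    have hkT₀ : T₀ * k = l * T₁ :=
      (div_eq_div_iff hT₁.ne' (Nat.cast_ne_zero.2 hk.ne_zero)).1 hratio
    have hTT₁ : T = ↑(l * l) * T₁ := by rw [hT]; push_cast; linear_combination (l : ℝ) * hkT₀
    exact fun ξ => hTT₁ ▸ (Periodic.nat_mul (fun t => hφper t ξ) (l * l))
  have hU : ∀ t, HasDerivAt (fun t => ψ (x₀ (t + θ)))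
      (fderiv ℝ ψ (x₀ (t + θ)) (ψ (x₀ (t + θ)))) t :=
    fun t => ((hψ1.differentiable one_ne_zero _).hasFDerivAt.comp_hasDerivAt _
      (hx₀sol (t + θ))).comp_add_const t θ
  have hx₀c : Continuous x₀ := continuous_iff_continuousAt.2 fun t => (hx₀sol t).continuousAt
  have key := inner_sub_eq_integral_of_periodic (A := fun t => fderiv ℝ ψ (x₀ (t + θ)))
    (b := fun t => φ t (x₀ (t + θ))) (F := fun t => η t s (x₀ θ)) (U := fun t => ψ (x₀ (t + θ)))
    (Y := fun t => y (t + θ)) s (N θ) ((hx₀T.add_const θ).comp (fderiv ℝ ψ))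
    (fun t => (congrArg (φ (t + T)) (hx₀T.add_const θ t)).trans (hφT _ t))
    (fun t => hflow t ▸ hηsol s (x₀ θ) t) hU (fun t => (hysol (t + θ)).comp_add_const t θ)
    (fun t => wedge_ne_zero_of_linearIndependent (hyindep (t + θ)))
    (hφcont.comp (continuous_id.prodMk (hx₀c.comp (continuous_add_const θ)))) (hηinit s (x₀ θ))
  rw [key, ← intervalIntegral.integral_comp_add_right _ θ]
  refine intervalIntegral.integral_congr fun t _ => ?_
  simp only [zero_add, hd, add_zero, hD, inner_inv_det_rowsMatrix_smul, add_sub_cancel_right]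

/-- **Lemma 3.**  With `x₀` a periodic solution of `ẋ = ψ(x)` of least period
`T₀`, `y` a solution of the linearized system independent of `ẋ₀`, `T = k l T₀`,
`N(θ) = (y(θ)^⊤ ẋ₀(θ)^⊥) f(θ)` and `d(t,θ) = (det D(t+θ))⁻¹` where `D(t)` has
rows `y(t)^⊤` and `ẋ₀(t)^⊥`:  for every `θ ∈ [0,T₀]` and `s ∈ [0,T]`,
`⟨η(T,s,x₀(θ)) − η(0,s,x₀(θ)), N(θ)⟩
  = ∫_{s−T+θ}^{s+θ} ⟨d(τ,0) φ(τ−θ, x₀(τ)),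
      ⟨ẋ₀(θ), N(θ)⟩ y(τ)^⊤ + ⟨y(θ), N(θ)⟩ ẋ₀(τ)^⊥⟩ dτ`. -/
theorem eta_difference_inner_N_integral_formula
    (ψ : EuclideanSpace ℝ (Fin 2) → EuclideanSpace ℝ (Fin 2))
    (hψ : ContDiff ℝ 2 ψ)
    (T₁ : ℝ) (hT₁ : 0 < T₁)
    (φ : ℝ → EuclideanSpace ℝ (Fin 2) → EuclideanSpace ℝ (Fin 2))
    (hφcont : Continuous fun p : ℝ × EuclideanSpace ℝ (Fin 2) => φ p.1 p.2)
    (hφper : ∀ t ξ, φ (t + T₁) ξ = φ t ξ)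
    (T₀ : ℝ) (hT₀ : 0 < T₀)
    (x₀ : ℝ → EuclideanSpace ℝ (Fin 2))
    (hx₀sol : ∀ t : ℝ, HasDerivAt x₀ (ψ (x₀ t)) t)
    (hx₀per : Function.Periodic x₀ T₀)
    (hx₀least : ∀ p : ℝ, 0 < p → Function.Periodic x₀ p → T₀ ≤ p)
    (l k : ℕ) (hl : Nat.Prime l) (hk : Nat.Prime k)
    (hratio : T₀ / T₁ = (l : ℝ) / (k : ℝ))
    (T : ℝ) (hT : T = (k : ℝ) * l * T₀)
    (Ω : ℝ → ℝ → EuclideanSpace ℝ (Fin 2) → EuclideanSpace ℝ (Fin 2))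
    (hΩinit : ∀ t₀ ξ, Ω t₀ t₀ ξ = ξ)
    (hΩsol : ∀ t₀ ξ t, HasDerivAt (fun s => Ω s t₀ ξ) (ψ (Ω t t₀ ξ)) t)
    (η : ℝ → ℝ → EuclideanSpace ℝ (Fin 2) → EuclideanSpace ℝ (Fin 2))
    (hηinit : ∀ s ξ, η s s ξ = 0)
    (hηsol : ∀ s ξ t, HasDerivAt (fun u => η u s ξ)
      (fderiv ℝ ψ (Ω t 0 ξ) (η t s ξ) + φ t (Ω t 0 ξ)) t)
    (y : ℝ → EuclideanSpace ℝ (Fin 2))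
    (hysol : ∀ t : ℝ, HasDerivAt y (fderiv ℝ ψ (x₀ t) (y t)) t)
    (hyindep : ∀ t : ℝ, LinearIndependent ℝ ![ψ (x₀ t), y t])
    (f : ℝ → EuclideanSpace ℝ (Fin 2))
    (N : ℝ → EuclideanSpace ℝ (Fin 2))
    (hN : ∀ θ : ℝ, N θ =
      (WithLp.toLp 2 ((columnsMatrix (topVec (y θ)) (perpVec (ψ (x₀ θ)))).mulVec (f θ)) :
        EuclideanSpace ℝ (Fin 2)))
    (D : ℝ → Matrix (Fin 2) (Fin 2) ℝ)
    (hD : ∀ t : ℝ, D t = rowsMatrix (topVec (y t)) (perpVec (ψ (x₀ t))))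
    (d : ℝ → ℝ → ℝ)
    (hd : ∀ t θ : ℝ, d t θ = ((D (t + θ)).det)⁻¹) :
    ∀ θ ∈ Set.Icc 0 T₀, ∀ s ∈ Set.Icc 0 T,
      ⟪η T s (x₀ θ) - η 0 s (x₀ θ), N θ⟫ =
        ∫ τ in (s - T + θ)..(s + θ),
          ⟪d τ 0 • φ (τ - θ) (x₀ τ),
            ⟪ψ (x₀ θ), N θ⟫ • topVec (y τ) + ⟪y θ, N θ⟫ • perpVec (ψ (x₀ τ))⟫ :=
  eta_difference_inner_N_integral_formula_general ψ hψ T₁ hT₁ φ hφcont hφper T₀ x₀ hx₀sol hx₀per l k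
    hk hratio T hT Ω hΩinit hΩsol η hηinit hηsol y hysol hyindep N D hD d hd
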